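/- arXiv:2206.05525 — 2 statements merged into one kernel-verified Lean document; each statement's English description precedes it below -/
import Mathlib

section
/- Let K be a field of characteristic 0 and let φ ∈ G_∞(n,K) be a system with linear part φ₁ = id (the identity matrix). If φ^s = id for some integer s ≥ 1, then φ = id. -/
noncomputable section

open MvPowerSeries

/-- A system of `n` formal power series in the `n` variables `x₁, …, xₙ` over `K`. -/
abbrev Sys (n : ℕ) (K : Type) [Field K] := Fin n → MvPowerSeries (Fin n) K

variable {n : ℕ} {K : Type} [Field K]

/-- The degree-`k` homogeneous component `φ_k` of a system `φ`. -/
def homC (k : ℕ) (φ : Sys n K) : Sys n K :=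
  fun i => (fun e => if (e.sum fun _ x => x) = k then MvPowerSeries.coeff (R := K) e (φ i) else 0 :
    MvPowerSeries (Fin n) K)

/-- The truncation `φ_{≤ m}` of a system `φ` to total degrees `≤ m`. -/
def truncLE (m : ℕ) (φ : Sys n K) : Sys n K :=
  fun i => (fun e => if (e.sum fun _ x => x) ≤ m then MvPowerSeries.coeff (R := K) e (φ i) else 0 :
    MvPowerSeries (Fin n) K)

/-- Composition (substitution) `φ ∘ ψ` of systems of formal power series.  The coefficient of a
monomial `e` in `φ ∘ ψ` is computed by substituting `ψ` into a sufficiently large polynomial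
truncation of `φ`; this agrees with the usual substitution whenever `ψ` has zero constant term. -/
def comp (φ ψ : Sys n K) : Sys n K :=
  fun i => (fun e =>
    MvPowerSeries.coeff (R := K) e
      (MvPolynomial.eval₂ (MvPowerSeries.C (σ := Fin n) (R := K)) ψ
        (MvPowerSeries.trunc K
          (Finsupp.equivFunOnFinite.symm fun _ => (e.sum fun _ x => x) + 1) (φ i))) :
    MvPowerSeries (Fin n) K)

/-- The identity system `id = (x₁, …, xₙ)`. -/
def idSys : Sys n K := fun i => MvPowerSeries.X i

/-- The `m`-fold composition `φ^m` of a system with itself (`φ^0 = id`). -/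
def iterComp (φ : Sys n K) : ℕ → Sys n K
  | 0 => idSys
  | m + 1 => comp (iterComp φ m) φ

/-- The Jacobian matrix of a system, i.e. its linear part viewed as a matrix. -/
def jac (φ : Sys n K) : Matrix (Fin n) (Fin n) K :=
  fun i j => MvPowerSeries.coeff (R := K) (Finsupp.single j 1) (φ i)

/-- The linear system of power series attached to a matrix `A`. -/
def ofMatrix (A : Matrix (Fin n) (Fin n) K) : Sys n K :=
  fun i => ∑ j, MvPowerSeries.C (σ := Fin n) (R := K) (A i j) * MvPowerSeries.X j

/-! Substituting a system without constant terms into a power series never lowers its order,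
and when the system has identity linear part it does not change the lowest homogeneous component
either. So if `φ = id + ρ` with all `ρ j` of order `≥ k`, then `φ^m - id` also has order `≥ k`
and its degree-`k` component is `m • ρ_k`. Taking `m = s` gives `s • ρ_k = 0`, hence `ρ_k = 0`
in characteristic zero, and induction on `k` gives `ρ = 0`. -/

namespace MvPowerSeries

section HomogeneousComponent

variable {σ R : Type*} [CommSemiring R]

theorem homogeneousComponent_zero_one : homogeneousComponent 0 (1 : MvPowerSeries σ R) = 1 := by
  classical
  ext d
  rw [coeff_homogeneousComponent, coeff_one]
  by_cases hd : d = 0 <;> simp [hd, Finsupp.degree_eq_zero_iff]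

theorem homogeneousComponent_prod {ι : Type*} (s : Finset ι) (f : ι → MvPowerSeries σ R)
    (p : ι → ℕ) (hf : ∀ i ∈ s, (p i : ℕ∞) ≤ (f i).order) :
    homogeneousComponent (∑ i ∈ s, p i) (∏ i ∈ s, f i) =
      ∏ i ∈ s, homogeneousComponent (p i) (f i) := by
  induction s using Finset.cons_induction with
  | empty => simpa using homogeneousComponent_zero_one
  | cons j s hj ih =>
    have hs : ∀ i ∈ s, (p i : ℕ∞) ≤ (f i).order := fun i hi => hf i (Finset.mem_cons_of_mem hi)
    have hprod : ((∑ i ∈ s, p i : ℕ) : ℕ∞) ≤ (∏ i ∈ s, f i).order := by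
      push_cast
      exact (Finset.sum_le_sum hs).trans (le_order_prod f s)
    rw [Finset.sum_cons, Finset.prod_cons, Finset.prod_cons,
      homogeneousComponent_mul_of_le_order (hf j (Finset.mem_cons_self j s)) hprod, ih hs]

theorem homogeneousComponent_pow {f : MvPowerSeries σ R} {p : ℕ} (hf : (p : ℕ∞) ≤ f.order)
    (m : ℕ) : homogeneousComponent (m * p) (f ^ m) = homogeneousComponent p f ^ m := by
  simpa using homogeneousComponent_prod (Finset.range m) (fun _ => f) (fun _ => p) fun _ _ => hf

theorem add_one_le_order_of_homogeneousComponent_eq_zero {f : MvPowerSeries σ R} {k : ℕ}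
    (hk : (k : ℕ∞) ≤ f.order) (h : homogeneousComponent k f = 0) : (k : ℕ∞) + 1 ≤ f.order :=
  Order.add_one_le_of_lt (hk.lt_of_ne fun hk' => homogeneousComponent_of_order hk' h)

variable {a : σ → MvPowerSeries σ R}

theorem degree_le_order_prod_pow (ha0 : ∀ s, constantCoeff (a s) = 0) (d : σ →₀ ℕ) :
    (d.degree : ℕ∞) ≤ (d.prod fun s m => a s ^ m).order := by
  rw [Finsupp.degree_apply, Finsupp.prod]
  push_cast
  exact (Finset.sum_le_sum fun s _ => le_order_pow_of_constantCoeff_eq_zero _ (ha0 s)).trans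
    (le_order_prod _ _)

theorem homogeneousComponent_degree_prod_pow (ha0 : ∀ s, constantCoeff (a s) = 0)
    (ha1 : ∀ s, homogeneousComponent 1 (a s) = X s) (d : σ →₀ ℕ) :
    homogeneousComponent d.degree (d.prod fun s m => a s ^ m) = monomial d 1 := by
  have hpow : ∀ s, homogeneousComponent (d s) (a s ^ d s) = X s ^ d s := fun s => by
    simpa [ha1] using homogeneousComponent_pow
      ((one_le_order_iff_constCoeff_eq_zero).2 (ha0 s)) (d s)
  rw [monomial_one_eq, Finsupp.degree_apply, Finsupp.prod, Finsupp.prod,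
    homogeneousComponent_prod _ _ _ fun s _ => le_order_pow_of_constantCoeff_eq_zero _ (ha0 s)]
  exact Finset.prod_congr rfl fun s _ => hpow s

theorem coeff_prod_pow_of_degree_le [DecidableEq σ] (ha0 : ∀ s, constantCoeff (a s) = 0)
    (ha1 : ∀ s, homogeneousComponent 1 (a s) = X s) {d e : σ →₀ ℕ} (h : e.degree ≤ d.degree) :
    coeff e (d.prod fun s m => a s ^ m) = if e = d then 1 else 0 := by
  rcases h.lt_or_eq with h | h
  · rw [coeff_of_lt_order ((Nat.cast_lt.2 h).trans_le (degree_le_order_prod_pow ha0 d)),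
      if_neg (by rintro rfl; exact h.false)]
  · have hcomp : coeff e (d.prod fun s m => a s ^ m) =
        coeff e (homogeneousComponent d.degree (d.prod fun s m => a s ^ m)) := by
      rw [coeff_homogeneousComponent, if_pos h]
    rw [hcomp, homogeneousComponent_degree_prod_pow ha0 ha1, coeff_monomial]

end HomogeneousComponent

section Subst

variable {σ τ R : Type*} [CommRing R] [Finite σ]

theorem order_le_order_subst {a : σ → MvPowerSeries τ R} (ha : ∀ s, constantCoeff (a s) = 0)
    (f : MvPowerSeries σ R) : f.order ≤ (subst a f).order := by
  have h1 : 1 ≤ ⨅ s, (a s).order := le_iInf fun s => one_le_order_iff_constCoeff_eq_zero.2 (ha s)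
  calc f.order = 1 * f.order := (one_mul _).symm
    _ ≤ (⨅ s, (a s).order) * f.order := mul_le_mul_left h1 _
    _ ≤ (subst a f).order := le_order_subst (hasSubst_of_constantCoeff_zero ha) f

theorem homogeneousComponent_subst_of_tangent {a : σ → MvPowerSeries σ R}
    (ha0 : ∀ s, constantCoeff (a s) = 0) (ha1 : ∀ s, homogeneousComponent 1 (a s) = X s)
    {f : MvPowerSeries σ R} {p : ℕ} (hf : (p : ℕ∞) ≤ f.order) :
    homogeneousComponent p (subst a f) = homogeneousComponent p f := by
  classical
  ext e
  rw [coeff_homogeneousComponent, coeff_homogeneousComponent]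
  split_ifs with he
  · rw [coeff_subst (hasSubst_of_constantCoeff_zero ha0), finsum_eq_single _ e,
      coeff_prod_pow_of_degree_le ha0 ha1 le_rfl, if_pos rfl, smul_eq_mul, mul_one]
    intro d hd
    rcases lt_or_ge d.degree p with hdp | hdp
    · rw [coeff_of_lt_order ((Nat.cast_lt.2 hdp).trans_le hf), zero_smul]
    · rw [coeff_prod_pow_of_degree_le ha0 ha1 (he ▸ hdp), if_neg (Ne.symm hd), smul_zero]
  · rfl

end Subst

end MvPowerSeries

theorem homC_apply (k : ℕ) (φ : Sys n K) (i : Fin n) :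
    homC k φ i = homogeneousComponent k (φ i) := by
  ext e
  rw [coeff_homogeneousComponent]
  rfl

theorem coeff_comp (φ ψ : Sys n K) (i : Fin n) (e : Fin n →₀ ℕ) :
    coeff e (comp φ ψ i) = coeff e (MvPolynomial.aeval ψ
      (trunc K (Finsupp.equivFunOnFinite.symm fun _ => e.degree + 1) (φ i))) := by
  rw [coeff_apply]
  rfl

theorem comp_eq_subst (φ ψ : Sys n K) (hψ : ∀ j, constantCoeff (ψ j) = 0) :
    comp φ ψ = fun i => subst ψ (φ i) := by
  funext i
  ext e
  set N : Fin n →₀ ℕ := Finsupp.equivFunOnFinite.symm fun _ => e.degree + 1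
  -- `comp` substitutes a box truncation of `φ i`, which keeps every monomial of total degree
  -- `≤ deg e`; substituting the remainder cannot produce such a monomial.
  set g : MvPowerSeries (Fin n) K := ↑(trunc K N (φ i))
  have htrunc : ((e.degree + 1 : ℕ) : ℕ∞) ≤ (φ i - g).order := by
    refine nat_le_order fun d hd => ?_
    have hdN : d < N := by
      refine lt_of_le_of_ne (fun j => ?_) (ne_of_apply_ne (· i) ?_)
      · exact ((d.le_degree j).trans (Nat.le_of_lt_succ hd)).trans (Nat.le_succ _)
      · exact ((d.le_degree i).trans_lt hd).ne
    rw [map_sub, MvPolynomial.coeff_coe, coeff_trunc, if_pos hdN, sub_self]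
  have hdiff : coeff e (subst ψ (φ i - g)) = 0 :=
    coeff_of_lt_order ((Nat.cast_lt.2 (Nat.lt_succ_self _)).trans_le
      (htrunc.trans (order_le_order_subst hψ _)))
  rw [subst_sub (hasSubst_of_constantCoeff_zero hψ), map_sub, sub_eq_zero, subst_coe] at hdiff
  rw [hdiff, coeff_comp]

theorem iterComp_succ_eq_subst {φ : Sys n K} (h0 : ∀ j, constantCoeff (φ j) = 0) (m : ℕ) :
    iterComp φ (m + 1) = fun i => subst φ (iterComp φ m i) :=
  comp_eq_subst _ _ h0

theorem le_order_and_homogeneousComponent_iterComp_sub_X {φ : Sys n K}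
    (h0 : ∀ j, constantCoeff (φ j) = 0) (h1 : ∀ j, homogeneousComponent 1 (φ j) = X j) {k : ℕ}
    (hk : ∀ j, (k : ℕ∞) ≤ (φ j - X j).order) (m : ℕ) (i : Fin n) :
    (k : ℕ∞) ≤ (iterComp φ m i - X i).order ∧
      homogeneousComponent k (iterComp φ m i - X i) = m • homogeneousComponent k (φ i - X i) := by
  induction m with
  | zero => simp [iterComp, idSys]
  | succ m ih =>
    have hsub : HasSubst φ := hasSubst_of_constantCoeff_zero h0
    have hsplit : iterComp φ (m + 1) i - X i = (φ i - X i) + subst φ (iterComp φ m i - X i) := by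
      rw [iterComp_succ_eq_subst h0, subst_sub hsub, subst_X hsub]
      ring
    rw [hsplit, map_add, homogeneousComponent_subst_of_tangent h0 h1 ih.1, ih.2, succ_nsmul']
    exact ⟨(le_min (hk i) (ih.1.trans (order_le_order_subst h0 _))).trans min_order_le_add, rfl⟩

/-- If `char K = 0`, `φ ∈ G_∞(n,K)` has linear part the identity and
`φ^s = id` for some `s ≥ 1`, then `φ = id`. -/
theorem periodic_with_identity_linear_part_is_identity
    (n : ℕ) (K : Type) [Field K] [CharZero K] (φ : Sys n K)
    (hφ0 : homC 0 φ = 0) (hφ1 : homC 1 φ = idSys)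
    (s : ℕ) (hs : 1 ≤ s) (hper : iterComp φ s = idSys) :
    φ = idSys := by
  have h0 : ∀ j, constantCoeff (φ j) = 0 := fun j => by
    simpa [homC_apply, coeff_homogeneousComponent] using congr_arg (coeff 0) (congr_fun hφ0 j)
  have h1 : ∀ j, homogeneousComponent 1 (φ j) = X j := fun j => by
    rw [← homC_apply, hφ1]
    rfl
  have hs0 : (s : K) ≠ 0 := Nat.cast_ne_zero.2 (by omega)
  have hord : ∀ k : ℕ, ∀ j, (k : ℕ∞) ≤ (φ j - X j).order := by
    intro k
    induction k with
    | zero => simp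
    | succ k ih =>
      intro j
      obtain ⟨-, hcomp⟩ := le_order_and_homogeneousComponent_iterComp_sub_X h0 h1 ih s j
      rw [hper, idSys, sub_self, map_zero, eq_comm, ← Nat.cast_smul_eq_nsmul K,
        smul_eq_zero] at hcomp
      exact_mod_cast
        add_one_le_order_of_homogeneousComponent_eq_zero (ih j) (hcomp.resolve_left hs0)
  funext j
  have htop : (φ j - X j).order = ⊤ :=
    top_le_iff.1 (ENat.forall_natCast_le_iff_le.1 fun k _ => hord k j)
  exact sub_eq_zero.1 (order_eq_top_iff.1 htop)
end
end

section
/- Every periodic element of G_∞(n,ℂ) is conjugate to its linear part: if φ ∈ G_∞(n,ℂ) satisfies φ^s = id for some s ≥ 1, then there exists ϕ ∈ G_∞(n,ℂ) such that ϕ∘φ = φ₁∘ϕ, where φ₁ is regarded as the linear system of power series corresponding to the Jacobian matrix of φ. -/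
/-!
Bochner's linearization trick. Write `A = φ₁`. The linear part of a composition is the product
of the linear parts, so `φ^s = id` forces `A^s = 1`. The average `ϕ = ∑_{k<s} A⁻ᵏ ∘ φᵏ` then
satisfies `ϕ ∘ φ = ∑_{k<s} A⁻ᵏ ∘ φᵏ⁺¹ = A ∘ ϕ`: the last sum is a cyclic shift of the first,
because `A⁻ˢ ∘ φˢ = A⁰ ∘ φ⁰`. The linear part of `ϕ` is `s • 1`, which is invertible in
characteristic zero.

Composition is only needed when the outer system is linear, or a constant-coefficient linear
combination of other systems. There everything reduces to one fact: when the inner series have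
no constant term, the coefficient of a monomial of degree `m` in `f ∘ ψ` depends
only on the part of `f` of degree `≤ m`.
-/

noncomputable section

open MvPowerSeries

variable {n : ℕ} {K : Type} [Field K]

theorem Finsupp.sum_snd_eq_degree {σ : Type*} (e : σ →₀ ℕ) : (e.sum fun _ x => x) = e.degree :=
  rfl

theorem Finsupp.degree_eq_one_iff {σ : Type*} (d : σ →₀ ℕ) :
    d.degree = 1 ↔ ∃ j, d = Finsupp.single j 1 := by
  classical
  rw [show d.degree = Multiset.card (Finsupp.toMultiset d) from (card_toMultiset d).symm,
    Multiset.card_eq_one]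
  refine exists_congr fun j => ?_
  rw [← Multiset.toFinsupp.injective.eq_iff, Finsupp.toMultiset_toFinsupp,
    Multiset.toFinsupp_singleton]

theorem Finsupp.lt_equivFunOnFinite_symm_const {σ : Type*} [Finite σ] [Nonempty σ]
    {d : σ →₀ ℕ} {m : ℕ} (h : d.degree ≤ m) :
    d < Finsupp.equivFunOnFinite.symm fun _ => m + 1 := by
  have hle : ∀ j, d j < m + 1 := fun j => (d.le_degree j).trans_lt (Nat.lt_succ_of_le h)
  refine lt_of_le_of_ne (fun j => (hle j).le) fun heq => ?_
  have := hle (Classical.arbitrary σ)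
  rw [heq, coe_equivFunOnFinite_symm] at this
  exact lt_irrefl _ this

theorem Finset.sum_range_succ_eq_sum_range_of_eq {M : Type*} [AddCancelCommMonoid M]
    {f : ℕ → M} {s : ℕ} (h : f s = f 0) :
    ∑ k ∈ Finset.range s, f (k + 1) = ∑ k ∈ Finset.range s, f k :=
  add_right_cancel (b := f 0) <| by rw [← Finset.sum_range_succ', Finset.sum_range_succ, h]

namespace MvPowerSeries

variable {ι σ R : Type*}

theorem coeff_prod_pow_eq_zero_of_degree_lt [Fintype ι] [CommSemiring R]
    {ψ : ι → MvPowerSeries σ R} (hψ : ∀ j, constantCoeff (ψ j) = 0)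
    {d : ι →₀ ℕ} {e : σ →₀ ℕ} (h : e.degree < d.degree) :
    coeff e (∏ j, ψ j ^ d j) = 0 := by
  apply coeff_of_lt_order
  calc (e.degree : ℕ∞) < d.degree := by exact_mod_cast h
    _ = ∑ j, (d j : ℕ∞) := by rw [Finsupp.degree_eq_sum]; push_cast; rfl
    _ ≤ ∑ j, (ψ j ^ d j).order :=
      Finset.sum_le_sum fun j _ => le_order_pow_of_constantCoeff_eq_zero _ (hψ j)
    _ ≤ (∏ j, ψ j ^ d j).order := le_order_prod _ _

theorem coeff_eval₂_eq_of_coeff_eq [Fintype ι] [CommRing R]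
    {ψ : ι → MvPowerSeries σ R} (hψ : ∀ j, constantCoeff (ψ j) = 0)
    {m : ℕ} {P Q : MvPolynomial ι R} (h : ∀ d : ι →₀ ℕ, d.degree ≤ m → P.coeff d = Q.coeff d)
    {e : σ →₀ ℕ} (he : e.degree ≤ m) :
    coeff e (P.eval₂ C ψ) = coeff e (Q.eval₂ C ψ) := by
  rw [← sub_eq_zero, ← map_sub, ← MvPolynomial.eval₂_sub, MvPolynomial.eval₂_eq', map_sum]
  refine Finset.sum_eq_zero fun d _ => ?_
  rw [coeff_C_mul]
  by_cases hd : d.degree ≤ m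
  · rw [MvPolynomial.coeff_sub, h d hd, sub_self, zero_mul]
  · rw [coeff_prod_pow_eq_zero_of_degree_lt hψ (by omega), mul_zero]

end MvPowerSeries

def compSeries (f : MvPowerSeries (Fin n) K) (ψ : Sys n K) : MvPowerSeries (Fin n) K :=
  fun e => coeff e
    ((trunc K (Finsupp.equivFunOnFinite.symm fun _ => (e.sum fun _ x => x) + 1) f).eval₂ C ψ)

theorem comp_apply (φ ψ : Sys n K) (i : Fin n) : comp φ ψ i = compSeries (φ i) ψ :=
  rfl

theorem coeff_compSeries (f : MvPowerSeries (Fin n) K) (ψ : Sys n K) (e : Fin n →₀ ℕ) :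
    coeff e (compSeries f ψ) =
      coeff e ((trunc K (Finsupp.equivFunOnFinite.symm fun _ => e.degree + 1) f).eval₂ C ψ) := by
  rw [coeff_apply]
  rfl

theorem coeff_compSeries_eq_of_coeff_eq [NeZero n] {ψ : Sys n K}
    (hψ : ∀ j, constantCoeff (ψ j) = 0) {f : MvPowerSeries (Fin n) K} {e : Fin n →₀ ℕ}
    {P : MvPolynomial (Fin n) K} (hP : ∀ d, d.degree ≤ e.degree → P.coeff d = coeff d f) :
    coeff e (compSeries f ψ) = coeff e (P.eval₂ C ψ) := by
  rw [coeff_compSeries]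
  refine coeff_eval₂_eq_of_coeff_eq hψ (fun d hd => ?_) le_rfl
  rw [coeff_trunc, if_pos (Finsupp.lt_equivFunOnFinite_symm_const hd), hP d hd]

theorem compSeries_add (f g : MvPowerSeries (Fin n) K) (ψ : Sys n K) :
    compSeries (f + g) ψ = compSeries f ψ + compSeries g ψ := by
  ext e
  rw [map_add, coeff_compSeries, coeff_compSeries, coeff_compSeries, map_add,
    MvPolynomial.eval₂_add, map_add]

theorem compSeries_C_mul (c : K) (f : MvPowerSeries (Fin n) K) (ψ : Sys n K) :
    compSeries (C c * f) ψ = C c * compSeries f ψ := by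
  ext e
  rw [coeff_compSeries, ← smul_eq_C_mul, map_smul, MvPolynomial.smul_eq_C_mul,
    MvPolynomial.eval₂_mul, MvPolynomial.eval₂_C, coeff_C_mul, coeff_C_mul, coeff_compSeries]

theorem compSeries_sum {α : Type*} (t : Finset α) (f : α → MvPowerSeries (Fin n) K)
    (ψ : Sys n K) : compSeries (∑ a ∈ t, f a) ψ = ∑ a ∈ t, compSeries (f a) ψ :=
  map_sum (AddMonoidHom.mk' (compSeries · ψ) (compSeries_add · · ψ)) f t

theorem compSeries_X [NeZero n] {ψ : Sys n K} (hψ : ∀ j, constantCoeff (ψ j) = 0) (j : Fin n) :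
    compSeries (X j) ψ = ψ j := by
  ext e
  rw [coeff_compSeries_eq_of_coeff_eq hψ (P := MvPolynomial.X j), MvPolynomial.eval₂_X]
  intro d _
  rw [MvPolynomial.coeff_X, coeff_X]
  exact if_congr eq_comm rfl rfl

theorem constantCoeff_compSeries [NeZero n] {ψ : Sys n K} (hψ : ∀ j, constantCoeff (ψ j) = 0)
    (f : MvPowerSeries (Fin n) K) : constantCoeff (compSeries f ψ) = constantCoeff f := by
  rw [← coeff_zero_eq_constantCoeff_apply,
    coeff_compSeries_eq_of_coeff_eq hψ (P := MvPolynomial.C (constantCoeff f)),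
    MvPolynomial.eval₂_C, coeff_zero_C]
  intro d hd
  rw [(Finsupp.degree_eq_zero_iff d).mp (by simpa using hd), MvPolynomial.coeff_zero_C,
    coeff_zero_eq_constantCoeff_apply]

theorem homC_zero_eq_zero_iff {φ : Sys n K} : homC 0 φ = 0 ↔ ∀ i, constantCoeff (φ i) = 0 := by
  refine ⟨fun h i => ?_, fun h => funext fun i => ?_⟩
  · have := congrFun (congrFun h i) 0
    simp only [homC, Finsupp.sum_zero_index, if_true, coeff_zero_eq_constantCoeff_apply] at this
    exact this
  · funext e
    simp only [homC, Finsupp.sum_snd_eq_degree, Finsupp.degree_eq_zero_iff]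
    split_ifs with he
    · rw [he, coeff_zero_eq_constantCoeff_apply, h]; rfl
    · rfl

open scoped Matrix

theorem comp_mulVec (M : Matrix (Fin n) (Fin n) K) (χ ψ : Sys n K) :
    comp (M.map C *ᵥ χ) ψ = M.map C *ᵥ comp χ ψ := by
  funext i
  simp only [comp_apply, Matrix.mulVec, dotProduct, compSeries_sum, compSeries_C_mul,
    Matrix.map_apply]

theorem comp_ofMatrix {ψ : Sys n K} (hψ : ∀ j, constantCoeff (ψ j) = 0)
    (A : Matrix (Fin n) (Fin n) K) : comp (ofMatrix A) ψ = A.map C *ᵥ ψ := by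
  funext i
  have : NeZero n := ⟨i.pos.ne'⟩
  simp only [comp_apply, ofMatrix, compSeries_sum, compSeries_C_mul, compSeries_X hψ,
    Matrix.mulVec, dotProduct, Matrix.map_apply]

theorem constantCoeff_comp {ψ : Sys n K} (hψ : ∀ j, constantCoeff (ψ j) = 0) (φ : Sys n K)
    (i : Fin n) : constantCoeff (comp φ ψ i) = constantCoeff (φ i) :=
  have : NeZero n := ⟨i.pos.ne'⟩
  constantCoeff_compSeries hψ (φ i)

theorem constantCoeff_iterComp {φ : Sys n K} (hφ : ∀ i, constantCoeff (φ i) = 0) (k : ℕ)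
    (i : Fin n) : constantCoeff (iterComp φ k i) = 0 := by
  induction k with
  | zero => exact constantCoeff_X i
  | succ k ih => rw [iterComp, constantCoeff_comp hφ, ih]

theorem constantCoeff_mulVec (M : Matrix (Fin n) (Fin n) K) {χ : Sys n K}
    (hχ : ∀ i, constantCoeff (χ i) = 0) (i : Fin n) : constantCoeff ((M.map C *ᵥ χ) i) = 0 := by
  simp [Matrix.mulVec, dotProduct, hχ]

theorem jac_idSys : jac (idSys : Sys n K) = 1 := by
  funext i j
  simp [jac, idSys, coeff_X, Matrix.one_apply, Finsupp.single_eq_single_iff, eq_comm]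

theorem jac_mulVec (M : Matrix (Fin n) (Fin n) K) (χ : Sys n K) :
    jac (M.map C *ᵥ χ) = M * jac χ := by
  funext i j
  simp [jac, Matrix.mulVec, dotProduct, Matrix.mul_apply]

theorem jac_sum {α : Type*} (t : Finset α) (φ : α → Sys n K) :
    jac (∑ a ∈ t, φ a) = ∑ a ∈ t, jac (φ a) := by
  funext i j
  simp [jac, Matrix.sum_apply]

theorem jac_comp {ψ : Sys n K} (hψ : ∀ j, constantCoeff (ψ j) = 0) (φ : Sys n K) :
    jac (comp φ ψ) = jac φ * jac ψ := by
  funext i l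
  have : NeZero n := ⟨i.pos.ne'⟩
  let P : MvPolynomial (Fin n) K :=
    MvPolynomial.C (constantCoeff (φ i)) + ∑ j, MvPolynomial.C (jac φ i j) * MvPolynomial.X j
  have hP : ∀ d : Fin n →₀ ℕ, d.degree ≤ 1 → P.coeff d = coeff d (φ i) := by
    intro d hd
    rcases Nat.le_one_iff_eq_zero_or_eq_one.mp hd with h | h
    · rw [(Finsupp.degree_eq_zero_iff d).mp h]
      simp [P, MvPolynomial.coeff_sum, MvPolynomial.coeff_X]
    · obtain ⟨k, rfl⟩ := (Finsupp.degree_eq_one_iff d).mp h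
      simp [P, MvPolynomial.coeff_sum, MvPolynomial.coeff_X, jac, Finsupp.single_eq_single_iff,
        eq_comm (a := (0 : Fin n →₀ ℕ))]
  show coeff (Finsupp.single l 1) (compSeries (φ i) ψ) = _
  rw [coeff_compSeries_eq_of_coeff_eq hψ (P := P) (by simpa using hP)]
  simp [P, Matrix.mul_apply, jac, coeff_C]

theorem jac_iterComp {φ : Sys n K} (hφ : ∀ i, constantCoeff (φ i) = 0) (k : ℕ) :
    jac (iterComp φ k) = jac φ ^ k := by
  induction k with
  | zero => exact jac_idSys
  | succ k ih => rw [iterComp, jac_comp hφ, ih, pow_succ]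

theorem comp_sum {α : Type*} (t : Finset α) (φ : α → Sys n K) (ψ : Sys n K) :
    comp (∑ a ∈ t, φ a) ψ = ∑ a ∈ t, comp (φ a) ψ := by
  funext i
  simp only [comp_apply, Finset.sum_apply, compSeries_sum]

theorem jac_pow_eq_one {φ : Sys n K} (hφ : ∀ i, constantCoeff (φ i) = 0) {s : ℕ}
    (hper : iterComp φ s = idSys) : jac φ ^ s = 1 := by
  rw [← jac_iterComp hφ, hper, jac_idSys]

/-- Bochner's average `∑_{k < s} φ₁⁻ᵏ ∘ φᵏ` (without the factor `1/s`): when `φ^s = id`, the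
linear part `φ₁` satisfies `φ₁^s = 1`, so `φ₁^(s-1)` is its inverse. -/
def linearizingAverage (φ : Sys n K) (s : ℕ) : Sys n K :=
  ∑ k ∈ Finset.range s, ((jac φ ^ (s - 1)) ^ k).map C *ᵥ iterComp φ k

theorem constantCoeff_linearizingAverage {φ : Sys n K} (hφ : ∀ i, constantCoeff (φ i) = 0)
    (s : ℕ) (i : Fin n) : constantCoeff (linearizingAverage φ s i) = 0 := by
  rw [linearizingAverage, Finset.sum_apply, map_sum]
  exact Finset.sum_eq_zero fun k _ => constantCoeff_mulVec _ (constantCoeff_iterComp hφ k) i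

theorem jac_linearizingAverage {φ : Sys n K} (hφ : ∀ i, constantCoeff (φ i) = 0) {s : ℕ}
    (hper : iterComp φ s = idSys) : jac (linearizingAverage φ s) = (s : K) • 1 := by
  rcases Nat.eq_zero_or_pos s with rfl | hs
  · rw [linearizingAverage, jac_sum]; simp
  have hinv : jac φ ^ (s - 1) * jac φ = 1 := by
    rw [← pow_succ, Nat.sub_add_cancel hs, jac_pow_eq_one hφ hper]
  have hcomm : Commute (jac φ ^ (s - 1)) (jac φ) := (Commute.self_pow _ _).symm
  simp only [linearizingAverage, jac_sum, jac_mulVec, jac_iterComp hφ, ← hcomm.mul_pow, hinv,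
    one_pow, Finset.sum_const, Finset.card_range, Nat.cast_smul_eq_nsmul]

theorem comp_linearizingAverage {φ : Sys n K} (hφ : ∀ i, constantCoeff (φ i) = 0) {s : ℕ}
    (hs : s ≠ 0) (hper : iterComp φ s = idSys) :
    comp (linearizingAverage φ s) φ = comp (ofMatrix (jac φ)) (linearizingAverage φ s) := by
  set A := jac φ
  set B := A ^ (s - 1)
  have hAB : A * B = 1 := by
    rw [← pow_succ', Nat.sub_add_cancel (Nat.pos_of_ne_zero hs), jac_pow_eq_one hφ hper]
  have hBs : B ^ s = 1 := by rw [← pow_mul, mul_comm, pow_mul, jac_pow_eq_one hφ hper, one_pow]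
  set g : ℕ → Sys n K := fun k => (B ^ k).map C *ᵥ iterComp φ k
  have hg : g s = g 0 := by simp only [g, hBs, hper, pow_zero]; rfl
  calc comp (∑ k ∈ Finset.range s, g k) φ
      = ∑ k ∈ Finset.range s, (B ^ k).map C *ᵥ iterComp φ (k + 1) := by
        simp only [comp_sum, g, comp_mulVec]; rfl
    _ = ∑ k ∈ Finset.range s, A.map C *ᵥ g (k + 1) := by
        refine Finset.sum_congr rfl fun k _ => ?_
        rw [Matrix.mulVec_mulVec, ← Matrix.map_mul, pow_succ', ← mul_assoc, hAB, one_mul]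
    _ = A.map C *ᵥ ∑ k ∈ Finset.range s, g k := by
        rw [← Matrix.mulVec_sum, Finset.sum_range_succ_eq_sum_range_of_eq hg]
    _ = comp (ofMatrix A) (∑ k ∈ Finset.range s, g k) :=
        (comp_ofMatrix (constantCoeff_linearizingAverage hφ s) A).symm

theorem periodic_complex_conjugate_to_linear_part_general
    (n : ℕ) (φ : Sys n ℂ) (hφ0 : homC 0 φ = 0)
    (hper : ∃ s : ℕ, 1 ≤ s ∧ iterComp φ s = idSys) :
    ∃ ϕ : Sys n ℂ, homC 0 ϕ = 0 ∧ IsUnit (jac ϕ).det ∧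
      comp ϕ φ = comp (ofMatrix (jac φ)) ϕ := by
  obtain ⟨s, hs, hper⟩ := hper
  have hφ := homC_zero_eq_zero_iff.mp hφ0
  refine ⟨linearizingAverage φ s,
    homC_zero_eq_zero_iff.mpr (constantCoeff_linearizingAverage hφ s), ?_,
    comp_linearizingAverage hφ (by omega) hper⟩
  rw [jac_linearizingAverage hφ hper, Matrix.det_smul, Matrix.det_one, mul_one]
  exact (pow_ne_zero _ (Nat.cast_ne_zero.mpr (by omega))).isUnit

/-- Every periodic series in `G_∞(n,ℂ)` is conjugate to its linear part. -/
theorem periodic_complex_conjugate_to_linear_part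
    (n : ℕ) (φ : Sys n ℂ) (hφ0 : homC 0 φ = 0) (hinv : IsUnit (jac φ).det)
    (hper : ∃ s : ℕ, 1 ≤ s ∧ iterComp φ s = idSys) :
    ∃ ϕ : Sys n ℂ, homC 0 ϕ = 0 ∧ IsUnit (jac ϕ).det ∧
      comp ϕ φ = comp (ofMatrix (jac φ)) ϕ :=
  periodic_complex_conjugate_to_linear_part_general n φ hφ0 hper
end
end
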